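/- arXiv:2207.08487 — 9 statements merged into one kernel-verified Lean document; each statement's English description precedes it below -/
import Mathlib

section
/- Let B be a small category and let M be the free monoid on the set of all morphisms of B (an element of M is a finite sequence of morphisms of B). Call a sequence in M reduced if it contains no identity morphism of B and no consecutive pair (f_i, f_{i+1}) of morphisms that are composable in B (i.e., the codomain of f_i equals the domain of f_{i+1}). Let S be the smallest monoid congruence on M such that (i) for every composable pair (u, v) in B, the two-element sequence (u, v) is congruent to the one-element sequence (v ∘ u), and (ii) for every object X of B, the one-element sequence (id_X) is congruent to the empty sequence. Then every element of M is S-congruent to exactly one reduced element. -/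
/-!
Van der Waerden's trick. Prepending an arrow to a reduced sequence and absorbing it (dropping
it if it is an identity, composing it with the head when they are composable) defines an action
of the free monoid on reduced sequences. By associativity and the unit laws of `B`, a composable
pair acts as its composite and an identity acts trivially, so congruent elements act alike. The
normal form of `m`, the result of letting `m` act on the empty sequence, is hence an invariant of
the congruence class; it is congruent to `m`, and a reduced sequence is its own normal form.
-/

open CategoryTheory

universe u

/-- An arrow of `B` is an identity arrow if its domain and codomain coincide and it is
the identity (up to `eqToHom`). -/
def IsIdArrow {B : Type u} [Category.{u} B] (a : Arrow B) : Prop :=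
  ∃ h : a.left = a.right, a.hom = eqToHom h

/-- A finite sequence of morphisms of `B` (an element of the free monoid on the set of
morphisms of `B`) is *reduced* if it contains no identity morphism and no consecutive
pair of composable morphisms. -/
def ReducedSeq {B : Type u} [Category.{u} B] (m : FreeMonoid (Arrow B)) : Prop :=
  (∀ a ∈ FreeMonoid.toList m, ¬ IsIdArrow a) ∧
    (FreeMonoid.toList m).Chain' fun a b => a.right ≠ b.left

/-- The generating relation: a two-element sequence consisting of a composable pair is
related to the one-element sequence consisting of the composite, and the one-element
sequence consisting of an identity morphism is related to the empty sequence. -/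
def GenRel (B : Type u) [Category.{u} B] :
    FreeMonoid (Arrow B) → FreeMonoid (Arrow B) → Prop := fun x y =>
  (∃ (a b : Arrow B) (h : a.right = b.left),
      x = FreeMonoid.of a * FreeMonoid.of b ∧
        y = FreeMonoid.of (Arrow.mk (a.hom ≫ eqToHom h ≫ b.hom))) ∨
  (∃ X : B, x = FreeMonoid.of (Arrow.mk (𝟙 X)) ∧ y = 1)

section NormalForm

variable {B : Type u} [Category.{u} B]

def arrowComp (a b : Arrow B) (h : a.right = b.left) : Arrow B :=
  Arrow.mk (a.hom ≫ eqToHom h ≫ b.hom)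

lemma isIdArrow_mk_id (X : B) : IsIdArrow (Arrow.mk (𝟙 X)) := ⟨rfl, rfl⟩

lemma IsIdArrow.eq_mk_id {a : Arrow B} (ha : IsIdArrow a) : a = Arrow.mk (𝟙 a.left) :=
  Arrow.ext rfl ha.1.symm (by simp [ha.2])

lemma arrowComp_of_isIdArrow_left {a b : Arrow B} (ha : IsIdArrow a) (h : a.right = b.left) :
    arrowComp a b h = b := by
  simp [arrowComp, ha.2]

lemma arrowComp_of_isIdArrow_right {a b : Arrow B} (hb : IsIdArrow b) (h : a.right = b.left) :
    arrowComp a b h = a := by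
  simp [arrowComp, hb.2]

lemma arrowComp_assoc {a b c : Arrow B} (hab : a.right = b.left) (hbc : b.right = c.left) :
    arrowComp (arrowComp a b hab) c hbc = arrowComp a (arrowComp b c hbc) hab :=
  congrArg Arrow.mk (by simp [arrowComp])

open Classical in
noncomputable def reduceCons : Arrow B → List (Arrow B) → List (Arrow B)
  | a, [] => if IsIdArrow a then [] else [a]
  | a, b :: l =>
    if IsIdArrow a then b :: l
    else if h : a.right = b.left then reduceCons (arrowComp a b h) l
    else a :: b :: l

lemma reduceCons_of_isIdArrow {a : Arrow B} (ha : IsIdArrow a) (l : List (Arrow B)) :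
    reduceCons a l = l := by
  cases l <;> simp [reduceCons, ha]

lemma reduceCons_nil {a : Arrow B} (ha : ¬IsIdArrow a) : reduceCons a [] = [a] := by
  simp [reduceCons, ha]

lemma reduceCons_cons_of_eq {a b : Arrow B} (ha : ¬IsIdArrow a) (h : a.right = b.left)
    (l : List (Arrow B)) : reduceCons a (b :: l) = reduceCons (arrowComp a b h) l := by
  simp [reduceCons, ha, h]

lemma reduceCons_cons_of_ne {a b : Arrow B} (ha : ¬IsIdArrow a) (h : a.right ≠ b.left)
    (l : List (Arrow B)) : reduceCons a (b :: l) = a :: b :: l := by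
  simp [reduceCons, ha, h]

lemma reducedSeq_ofList_iff (l : List (Arrow B)) :
    ReducedSeq (FreeMonoid.ofList l) ↔
      (∀ a ∈ l, ¬IsIdArrow a) ∧ l.IsChain fun a b => a.right ≠ b.left :=
  Iff.rfl

lemma reducedSeq_ofList_nil : ReducedSeq (FreeMonoid.ofList ([] : List (Arrow B))) :=
  ⟨by simp, List.isChain_nil⟩

lemma ReducedSeq.of_cons {a : Arrow B} {l : List (Arrow B)}
    (h : ReducedSeq (FreeMonoid.ofList (a :: l))) : ReducedSeq (FreeMonoid.ofList l) :=
  ⟨fun x hx => h.1 x (List.mem_cons_of_mem _ hx), h.2.tail⟩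

lemma reducedSeq_reduceCons (a : Arrow B) {l : List (Arrow B)}
    (hl : ReducedSeq (FreeMonoid.ofList l)) : ReducedSeq (FreeMonoid.ofList (reduceCons a l)) := by
  induction l generalizing a with
  | nil =>
    by_cases ha : IsIdArrow a
    · rwa [reduceCons_of_isIdArrow ha]
    · rw [reduceCons_nil ha]
      exact ⟨List.forall_mem_singleton.2 ha, List.isChain_singleton a⟩
  | cons b l ih =>
    by_cases ha : IsIdArrow a
    · rwa [reduceCons_of_isIdArrow ha]
    by_cases h : a.right = b.left
    · rw [reduceCons_cons_of_eq ha h]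
      exact ih _ hl.of_cons
    · rw [reduceCons_cons_of_ne ha h, reducedSeq_ofList_iff, List.isChain_cons_cons]
      exact ⟨List.forall_mem_cons.2 ⟨ha, hl.1⟩, h, hl.2⟩

lemma reduceCons_eq_cons {a : Arrow B} {l : List (Arrow B)}
    (h : ReducedSeq (FreeMonoid.ofList (a :: l))) : reduceCons a l = a :: l := by
  have ha : ¬IsIdArrow a := h.1 a List.mem_cons_self
  cases l with
  | nil => exact reduceCons_nil ha
  | cons b l => exact reduceCons_cons_of_ne ha (List.isChain_cons_cons.1 h.2).1 l

lemma reduceCons_reduceCons {l : List (Arrow B)} (hl : ReducedSeq (FreeMonoid.ofList l))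
    {a b : Arrow B} (h : a.right = b.left) :
    reduceCons a (reduceCons b l) = reduceCons (arrowComp a b h) l := by
  induction l generalizing a b with
  | nil =>
    by_cases hb : IsIdArrow b
    · rw [reduceCons_of_isIdArrow hb, arrowComp_of_isIdArrow_right hb]
    by_cases ha : IsIdArrow a
    · rw [reduceCons_of_isIdArrow ha, arrowComp_of_isIdArrow_left ha]
    rw [reduceCons_nil hb, reduceCons_cons_of_eq ha h]
  | cons c l ih =>
    by_cases hb : IsIdArrow b
    · rw [reduceCons_of_isIdArrow hb, arrowComp_of_isIdArrow_right hb]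
    by_cases ha : IsIdArrow a
    · rw [reduceCons_of_isIdArrow ha, arrowComp_of_isIdArrow_left ha]
    by_cases hbc : b.right = c.left
    · rw [reduceCons_cons_of_eq hb hbc, ih hl.of_cons (b := arrowComp b c hbc) h,
        ← arrowComp_assoc h hbc]
      by_cases hab : IsIdArrow (arrowComp a b h)
      · rw [reduceCons_of_isIdArrow hab, arrowComp_of_isIdArrow_left hab (b := c) hbc,
          reduceCons_eq_cons hl]
      · rw [reduceCons_cons_of_eq hab hbc]
    · rw [reduceCons_cons_of_ne hb hbc, reduceCons_cons_of_eq ha h]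

noncomputable def reducedAction :
    FreeMonoid (Arrow B) →*
      Function.End {l : List (Arrow B) // ReducedSeq (FreeMonoid.ofList l)} :=
  FreeMonoid.lift fun a l => ⟨reduceCons a l.1, reducedSeq_reduceCons a l.2⟩

lemma conGen_le_ker_reducedAction : conGen (GenRel B) ≤ Con.ker reducedAction := by
  rw [Con.conGen_le]
  rintro x y (⟨a, b, h, rfl, rfl⟩ | ⟨X, rfl, rfl⟩)
  · show reducedAction (FreeMonoid.of a * FreeMonoid.of b) = reducedAction (FreeMonoid.of _)
    rw [map_mul]
    funext l
    exact Subtype.ext (reduceCons_reduceCons l.2 h)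
  · show reducedAction (FreeMonoid.of _) = reducedAction 1
    rw [map_one]
    funext l
    exact Subtype.ext (reduceCons_of_isIdArrow (isIdArrow_mk_id X) l.1)

noncomputable def normalForm (m : FreeMonoid (Arrow B)) : FreeMonoid (Arrow B) :=
  FreeMonoid.ofList (reducedAction m ⟨[], reducedSeq_ofList_nil⟩).1

lemma reducedSeq_normalForm (m : FreeMonoid (Arrow B)) : ReducedSeq (normalForm m) :=
  (reducedAction m _).2

lemma normalForm_of_mul (a : Arrow B) (m : FreeMonoid (Arrow B)) :
    normalForm (FreeMonoid.of a * m) = FreeMonoid.ofList (reduceCons a (normalForm m).toList) := by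
  rw [normalForm, map_mul]
  rfl

lemma normalForm_eq_of_conGen {m m' : FreeMonoid (Arrow B)} (h : conGen (GenRel B) m m') :
    normalForm m = normalForm m' := by
  rw [normalForm, normalForm, (conGen_le_ker_reducedAction h : reducedAction m = reducedAction m')]

lemma normalForm_of_reducedSeq {r : FreeMonoid (Arrow B)} (hr : ReducedSeq r) :
    normalForm r = r := by
  induction r using FreeMonoid.inductionOn' with
  | one => rfl
  | of_mul a r ih =>
    rw [normalForm_of_mul, ih (ReducedSeq.of_cons (l := r.toList) hr)]
    exact congrArg FreeMonoid.ofList (reduceCons_eq_cons hr)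

lemma conGen_of_mul_of_isIdArrow {a : Arrow B} (ha : IsIdArrow a) (m : FreeMonoid (Arrow B)) :
    conGen (GenRel B) (FreeMonoid.of a * m) m := by
  rw [ha.eq_mk_id]
  simpa using (conGen (GenRel B)).mul (ConGen.Rel.of _ _ (Or.inr ⟨_, rfl, rfl⟩))
    ((conGen (GenRel B)).refl m)

lemma conGen_of_mul_ofList_reduceCons (a : Arrow B) (l : List (Arrow B)) :
    conGen (GenRel B) (FreeMonoid.of a * FreeMonoid.ofList l)
      (FreeMonoid.ofList (reduceCons a l)) := by
  induction l generalizing a with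
  | nil =>
    by_cases ha : IsIdArrow a
    · rw [reduceCons_of_isIdArrow ha]
      exact conGen_of_mul_of_isIdArrow ha _
    rw [reduceCons_nil ha]
    exact (conGen (GenRel B)).refl _
  | cons b l ih =>
    by_cases ha : IsIdArrow a
    · rw [reduceCons_of_isIdArrow ha]
      exact conGen_of_mul_of_isIdArrow ha _
    by_cases h : a.right = b.left
    · rw [reduceCons_cons_of_eq ha h]
      have hab : conGen (GenRel B) (FreeMonoid.of a * FreeMonoid.of b)
          (FreeMonoid.of (arrowComp a b h)) := ConGen.Rel.of _ _ (Or.inl ⟨a, b, h, rfl, rfl⟩)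
      exact ((conGen (GenRel B)).mul hab ((conGen (GenRel B)).refl _)).trans (ih _)
    · rw [reduceCons_cons_of_ne ha h]
      exact (conGen (GenRel B)).refl _

lemma conGen_normalForm (m : FreeMonoid (Arrow B)) : conGen (GenRel B) m (normalForm m) := by
  induction m using FreeMonoid.inductionOn' with
  | one => exact (conGen (GenRel B)).refl 1
  | of_mul a m ih =>
    rw [normalForm_of_mul]
    exact ((conGen (GenRel B)).mul ((conGen (GenRel B)).refl _) ih).trans
      (conGen_of_mul_ofList_reduceCons a _)

end NormalForm

/-- **Isbell–Börger.** Every element of the free monoid on the morphisms of a small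
category `B` is congruent, modulo the smallest congruence identifying composable pairs
with their composite and identities with the empty sequence, to exactly one reduced
element. -/
theorem exists_unique_reduced_rep {B : Type u} [Category.{u} B]
    (m : FreeMonoid (Arrow B)) :
    ∃! r : FreeMonoid (Arrow B), ReducedSeq r ∧ conGen (GenRel B) m r := by
  refine ⟨normalForm m, ⟨reducedSeq_normalForm m, conGen_normalForm m⟩, ?_⟩
  rintro r ⟨hr, hmr⟩
  rw [← normalForm_of_reducedSeq hr]
  exact (normalForm_eq_of_conGen hmr).symm
end

section
/- Let A be a discrete small category (a category with no non-identity morphisms), let F, G : A ⥤ B be two functors into a small category B, and let Q : B ⥤ Q be the coequalizer of F and G in the category Cat of small categories. Then the functor Q is faithful. -/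
open CategoryTheory Limits

universe v u

/-!
Since `A` is discrete, any functor out of `B` that sends all objects to one object coequalizes
`F` and `G`, hence factors through the coequalizer; so it suffices that `B` have a faithful
functor to a one-object category, i.e. to a monoid. This is van der Waerden's trick: a morphism
`f` acts on words of non-identity, pairwise non-composable arrows by composing `f` onto the last
arrow when they are composable (dropping the result if it is an identity) and appending `f`
otherwise. Functoriality holds on reduced words, and `f` is recovered from its action on `[]`.
-/

namespace CategoryTheory

namespace ReducedWord

variable {B : Type u} [Category.{v} B]

def IsIdentity (e : Arrow B) : Prop := ∃ a, e = Arrow.mk (𝟙 a)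

/-- Words are read from right to left: the head of the list is the last arrow applied. -/
def IsReduced : List (Arrow B) → Prop
  | [] => True
  | e :: w => ¬ IsIdentity e ∧ IsReduced w ∧ ∀ e' ∈ w.head?, e'.right ≠ e.left

open Classical in
noncomputable def consNonId (e : Arrow B) (w : List (Arrow B)) : List (Arrow B) :=
  if IsIdentity e then w else e :: w

open Classical in
noncomputable def act {x y : B} (f : x ⟶ y) : List (Arrow B) → List (Arrow B)
  | e :: w =>
      if h : e.right = x then consNonId (Arrow.mk (e.hom ≫ eqToHom h ≫ f)) w
      else consNonId (Arrow.mk f) (e :: w)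
  | [] => consNonId (Arrow.mk f) []

lemma head_composable_or_not (w : List (Arrow B)) (x : B) :
    (∃ e w', w = e :: w' ∧ e.right = x) ∨ ∀ e ∈ w.head?, e.right ≠ x := by
  rcases w with _ | ⟨e, w'⟩
  · simp
  · by_cases h : e.right = x
    · exact .inl ⟨e, w', rfl, h⟩
    · exact .inr (by simpa using h)

lemma act_cons {x y : B} (f : x ⟶ y) (e : Arrow B) (w : List (Arrow B)) (h : e.right = x) :
    act f (e :: w) = consNonId (Arrow.mk (e.hom ≫ eqToHom h ≫ f)) w := by
  rw [act, dif_pos h]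

lemma act_of_not_composable {x y : B} (f : x ⟶ y) {w : List (Arrow B)}
    (hw : ∀ e ∈ w.head?, e.right ≠ x) : act f w = consNonId (Arrow.mk f) w := by
  rcases w with _ | ⟨e, w'⟩
  · rfl
  · rw [act, dif_neg (hw e rfl)]

lemma isReduced_consNonId {e : Arrow B} {w : List (Arrow B)} (hw : IsReduced w)
    (he : ∀ e' ∈ w.head?, e'.right ≠ e.left) : IsReduced (consNonId e w) := by
  unfold consNonId
  split_ifs with hid
  · exact hw
  · exact ⟨hid, hw, he⟩

lemma isReduced_act {x y : B} (f : x ⟶ y) {w : List (Arrow B)} (hw : IsReduced w) :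
    IsReduced (act f w) := by
  obtain ⟨e, w', rfl, h⟩ | hx := head_composable_or_not w x
  · rw [act_cons f e w' h]
    exact isReduced_consNonId hw.2.1 hw.2.2
  · rw [act_of_not_composable f hx]
    exact isReduced_consNonId hw hx

lemma act_id (x : B) {w : List (Arrow B)} (hw : IsReduced w) : act (𝟙 x) w = w := by
  obtain ⟨e, w', rfl, h⟩ | hx := head_composable_or_not w x
  · rw [act_cons _ e w' h]
    simpa [consNonId] using hw.1
  · rw [act_of_not_composable _ hx, consNonId, if_pos ⟨x, rfl⟩]

lemma act_consNonId {y z : B} (g : y ⟶ z) (e : Arrow B) (h : e.right = y)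
    {w : List (Arrow B)} (hw : ∀ e' ∈ w.head?, e'.right ≠ e.left) :
    act g (consNonId e w) = consNonId (Arrow.mk (e.hom ≫ eqToHom h ≫ g)) w := by
  by_cases hid : IsIdentity e
  · obtain ⟨a, rfl⟩ := hid
    subst h
    rw [consNonId, if_pos ⟨a, rfl⟩, act_of_not_composable g hw]
    simp
  · rw [consNonId, if_neg hid, act_cons g e w h]

lemma act_comp {x y z : B} (f : x ⟶ y) (g : y ⟶ z) {w : List (Arrow B)} (hw : IsReduced w) :
    act g (act f w) = act (f ≫ g) w := by
  obtain ⟨e, w', rfl, h⟩ | hx := head_composable_or_not w x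
  · rw [act_cons f e w' h, act_consNonId g (Arrow.mk (e.hom ≫ eqToHom h ≫ f)) rfl hw.2.2,
      act_cons (f ≫ g) e w' h]
    simp
  · rw [act_of_not_composable f hx, act_consNonId g (Arrow.mk f) rfl hx,
      act_of_not_composable (f ≫ g) hx]
    simp

lemma eq_of_consNonId_nil_eq {e e' : Arrow B} (hl : e.left = e'.left)
    (h : consNonId e [] = consNonId e' []) : e = e' := by
  by_cases he : IsIdentity e <;> by_cases he' : IsIdentity e'
  · obtain ⟨a, rfl⟩ := he
    obtain ⟨b, rfl⟩ := he'
    cases hl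
    rfl
  · simp [consNonId, he, he'] at h
  · simp [consNonId, he, he'] at h
  · simpa [consNonId, he, he'] using h

end ReducedWord

variable (B : Type u) [Category.{v} B]

def ReducedWord : Type (max u v) := {w : List (Arrow B) // ReducedWord.IsReduced w}

namespace ReducedWord

noncomputable def toEnd : B ⥤ SingleObj (Function.End (ReducedWord B)) where
  obj _ := SingleObj.star _
  map f w := ⟨act f w.1, isReduced_act f w.2⟩
  map_id x := funext fun w => Subtype.ext (act_id x w.2)
  map_comp f g := funext fun w => Subtype.ext (act_comp f g w.2).symm

instance : (toEnd B).Faithful where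
  map_injective h := (Arrow.mk_inj _ _).1 <|
    eq_of_consNonId_nil_eq rfl (congrArg Subtype.val (congrFun h ⟨[], trivial⟩))

end ReducedWord

lemma Functor.ext_of_discrete {A D : Type*} [Category A] [Category D]
    (hA : ∀ (X Y : A) (f : X ⟶ Y), ∃ h : X = Y, f = eqToHom h) {P Q : A ⥤ D}
    (h : ∀ a, P.obj a = Q.obj a) : P = Q :=
  Functor.ext h fun X Y f => by
    obtain ⟨rfl, rfl⟩ := hA X Y f
    simp

lemma Cat.faithful_π_of_isColimit {A B D : Cat.{v, u}} {F G : A ⟶ B} {c : Cofork F G}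
    (hc : IsColimit c) (H : B ⟶ D) [H.toFunctor.Faithful] (hH : F ≫ H = G ≫ H) :
    c.π.toFunctor.Faithful :=
  Functor.Faithful.of_comp_eq (H := H.toFunctor) <|
    (Cat.Hom.comp_toFunctor _ _).symm.trans
      (congrArg Cat.Hom.toFunctor (hc.fac (Cofork.ofπ H hH) .one))

end CategoryTheory

/-- The coequalizer, in the category `Cat` of small categories, of two functors defined
on a discrete category is faithful. -/
theorem faithful_coequalizer_of_discrete
    (A B : Cat.{u, u})
    (hA : ∀ (X Y : A) (f : X ⟶ Y), ∃ h : X = Y, f = eqToHom h)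
    (F G : A ⟶ B) (c : Cofork F G) (hc : IsColimit c) :
    (c.π.toFunctor : (B : Type u) ⥤ (c.pt : Type u)).Faithful := by
  let H : B ⟶ Cat.of (AsSmall.{u} (SingleObj (Function.End (ReducedWord B)))) :=
    (ReducedWord.toEnd B ⋙ AsSmall.up).toCatHom
  have : H.toFunctor.Faithful :=
    @Functor.Faithful.comp _ _ _ _ _ _ _ _ _ AsSmall.equiv.faithful_functor
  refine Cat.faithful_π_of_isColimit hc H (Cat.ext ?_)
  rw [Cat.Hom.comp_toFunctor, Cat.Hom.comp_toFunctor]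
  exact Functor.ext_of_discrete hA fun _ => rfl
end

section
/- Let C be a small category. Let Q : C ⥤ Q_C be the coequalizer in Cat of the pair of functors d0, d1 : ∐_{σ} 1 ⇉ C, where the coproduct of copies of the terminal category 1 is indexed by the set of all isomorphisms σ of C, and d0 (respectively d1) sends the object of the σ-indexed copy of 1 to the domain (respectively codomain) of σ. Then the category Q_C is skeletal: every isomorphism of Q_C is an automorphism. -/
open CategoryTheory Limits

universe u

/-- The set of isomorphisms of `C`, used to index a copower of the terminal category:
this coproduct of copies of the terminal category `1` is the discrete category on the
set of isomorphisms of `C`. -/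
def IsoIndex (C : Type u) [Category.{u} C] : Type u := Σ X Y : C, X ≅ Y

/-- The functor `d0` sending the object of the copy of `1` indexed by an isomorphism
`σ` of `C` to the domain of `σ`. -/
def isoDom (C : Type u) [Category.{u} C] :
    Cat.of (Discrete (IsoIndex C)) ⟶ Cat.of C :=
  Functor.toCatHom (Discrete.functor fun σ : IsoIndex C => σ.1)

/-- The functor `d1` sending the object of the copy of `1` indexed by an isomorphism
`σ` of `C` to the codomain of `σ`. -/
def isoCod (C : Type u) [Category.{u} C] :
    Cat.of (Discrete (IsoIndex C)) ⟶ Cat.of C :=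
  Functor.toCatHom (Discrete.functor fun σ : IsoIndex C => σ.2.1)

/-!
The projection `π : C ⥤ Q_C` of a coequalizer in `Cat` is surjective on objects: `π` corestricts
to the full subcategory on its image, the corestriction still coequalizes, and the functor it
induces out of `Q_C` is a section of the inclusion. The coequalizer condition identifies the
domain and codomain of every isomorphism of `C`. Conversely, `C ⥤ Skeleton C` coequalizes
`d0, d1`, so it factors through `π`; applying the factorization to an isomorphism
`π X ≅ π Y` yields `X ≅ Y`, whence `π X = π Y`.
-/

namespace CategoryTheory.Cat

universe v w

variable {A B : Cat.{v, w}} {f g : A ⟶ B}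

lemma π_obj_surjective_of_isColimit {c : Cofork f g} (hc : IsColimit c) :
    Function.Surjective c.π.toFunctor.obj := by
  let P : ObjectProperty c.pt := Set.range c.π.toFunctor.obj
  let π' : B ⟶ Cat.of P.FullSubcategory := (P.lift c.π.toFunctor fun X => ⟨X, rfl⟩).toCatHom
  have lift_congr : ∀ (G G' : A ⥤ c.pt) (hG : ∀ X, P (G.obj X)) (hG' : ∀ X, P (G'.obj X)),
      G = G' → P.lift G hG = P.lift G' hG' := by
    rintro G _ _ _ rfl; rfl
  have hπ' : f ≫ π' = g ≫ π' :=
    congrArg Functor.toCatHom (lift_congr _ _ _ _ (congrArg Cat.Hom.toFunctor c.condition))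
  let s : c.pt ⟶ Cat.of P.FullSubcategory := Cofork.IsColimit.desc hc π' hπ'
  have hs : s ≫ (P.ι.toCatHom : Cat.of P.FullSubcategory ⟶ c.pt) = 𝟙 c.pt :=
    Cofork.IsColimit.hom_ext hc (by rw [← Category.assoc, Cofork.IsColimit.π_desc']; rfl)
  intro x
  obtain ⟨X, hX⟩ := (s.toFunctor.obj x).property
  exact ⟨X, hX.trans (Functor.congr_obj (congrArg Cat.Hom.toFunctor hs) x)⟩

end CategoryTheory.Cat

section

variable {C : Type u} [Category.{u} C]

lemma isoDom_comp_eq_isoCod_comp {D : Type u} [Category.{u} D] (F : C ⥤ D)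
    (hF : ∀ {X Y : C}, (X ≅ Y) → F.obj X = F.obj Y) :
    isoDom C ≫ F.toCatHom = isoCod C ≫ F.toCatHom :=
  Cat.ext <| Discrete.functor_ext fun i => hF i.2.2

lemma isoDom_isoCod_cofork_π_obj_eq_of_iso (c : Cofork (isoDom C) (isoCod C)) {X Y : C}
    (e : X ≅ Y) :
    c.π.toFunctor.obj X = c.π.toFunctor.obj Y :=
  Functor.congr_obj (congrArg Cat.Hom.toFunctor c.condition) ⟨⟨X, Y, e⟩⟩

lemma nonempty_iso_of_isoDom_isoCod_cofork_π_obj_iso {c : Cofork (isoDom C) (isoCod C)}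
    (hc : IsColimit c) {X Y : C} (e : c.π.toFunctor.obj X ≅ c.π.toFunctor.obj Y) :
    Nonempty (X ≅ Y) := by
  let F := toSkeletonFunctor C
  have hF : isoDom C ≫ F.toCatHom = isoCod C ≫ F.toCatHom :=
    isoDom_comp_eq_isoCod_comp F fun e => skeleton_skeletal C ⟨F.mapIso e⟩
  let G := Cofork.IsColimit.desc hc _ hF
  have hG := congrArg Cat.Hom.toFunctor (Cofork.IsColimit.π_desc' hc _ hF)
  have hXY : F.obj X = F.obj Y :=
    (Functor.congr_obj hG X).symm.trans
      ((skeleton_skeletal C ⟨G.toFunctor.mapIso e⟩).trans (Functor.congr_obj hG Y))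
  exact Quotient.exact hXY

end

/-- The coequalizer in `Cat` of the two functors `d0, d1 : ∐_σ 1 ⇉ C`, indexed by the
isomorphisms of `C` and picking out their domains and codomains, is a skeletal
category: any two isomorphic objects are equal, i.e. every isomorphism is an
automorphism. -/
theorem skeletal_coequalizer_of_isoDom_isoCod (C : Type u) [Category.{u} C]
    (c : Cofork (isoDom C) (isoCod C)) (hc : IsColimit c) :
    Skeletal (c.pt : Type u) := by
  rintro x y ⟨e⟩
  obtain ⟨X, rfl⟩ := Cat.π_obj_surjective_of_isColimit hc x
  obtain ⟨Y, rfl⟩ := Cat.π_obj_surjective_of_isColimit hc y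
  obtain ⟨e'⟩ := nonempty_iso_of_isoDom_isoCod_cofork_π_obj_iso hc e
  exact isoDom_isoCod_cofork_π_obj_eq_of_iso c e'
end

section
/- The full subcategory of Cat consisting of the skeletal small categories is reflective in Cat: the inclusion functor from the full subcategory of skeletal small categories into Cat has a left adjoint. -/
/-!
Identify isomorphic objects of `C` strictly: the category `Push σ` has the classes
`σ X = toSkeleton X` as objects and is presented by the arrows of `C`, pushed along `σ`, modulo
the identities and composites of `C`. A functor `F` into a skeletal category sends isomorphic
objects to equal ones, so `F.obj` factors through `σ` and `F` factors through `Push σ`, uniquely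
because `σ` is surjective. `Push σ` is itself skeletal: `toSkeletonFunctor C` factors through it
by a functor that is injective on objects.
-/

open CategoryTheory Limits

universe u v w u' v'

namespace CategoryTheory

variable {C : Type u} [Category.{v} C] {W : Type w} (σ : C → W)

namespace Push

def toPaths : C ⥤q Paths (Quiver.Push σ) := Quiver.Push.of σ ⋙q Paths.of _

inductive homRel : HomRel (Paths (Quiver.Push σ))
  | id (X : C) : homRel ((toPaths σ).map (𝟙 X)) (𝟙 ((toPaths σ).obj X))
  | comp {X Y Z : C} (f : X ⟶ Y) (g : Y ⟶ Z) :
      homRel ((toPaths σ).map f ≫ (toPaths σ).map g) ((toPaths σ).map (f ≫ g))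

end Push

abbrev Push : Type w := CategoryTheory.Quotient (Push.homRel σ)

namespace Push

def functor : C ⥤ Push σ where
  obj X := (Quotient.functor (homRel σ)).obj (σ X)
  map f := (Quotient.functor (homRel σ)).map ((toPaths σ).map f)
  map_id X := Quotient.sound _ (homRel.id X)
  map_comp f g := (Quotient.sound _ (homRel.comp f g)).symm

variable {σ} {D : Type u'} [Category.{v'} D]

/-- `F.copyObj` has objects `τ (σ X)` on the nose, which is what the arrows of `Quiver.Push σ`
need. -/
def liftPaths (F : C ⥤ D) (τ : W → D) (h : ∀ X, F.obj X = τ (σ X)) :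
    Paths (Quiver.Push σ) ⥤ D :=
  Paths.lift
    { obj := τ
      map := fun | Quiver.PushQuiver.arrow f => (F.copyObj _ fun X => eqToIso (h X)).map f }

lemma liftPaths_map_toPaths_map (F : C ⥤ D) (τ : W → D) (h : ∀ X, F.obj X = τ (σ X))
    {X Y : C} (f : X ⟶ Y) :
    (liftPaths F τ h).map ((toPaths σ).map f) = (F.copyObj _ fun X => eqToIso (h X)).map f :=
  Paths.lift_toPath _ _

def lift (F : C ⥤ D) (τ : W → D) (h : ∀ X, F.obj X = τ (σ X)) : Push σ ⥤ D :=
  Quotient.lift _ (liftPaths F τ h) <| by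
    rintro _ _ _ _ (⟨X⟩ | ⟨f, g⟩)
    · rw [liftPaths_map_toPaths_map]
      exact Functor.map_id _ X
    · rw [Functor.map_comp, liftPaths_map_toPaths_map, liftPaths_map_toPaths_map,
        liftPaths_map_toPaths_map]
      exact (Functor.map_comp _ f g).symm

lemma functor_comp_lift (F : C ⥤ D) (τ : W → D) (h : ∀ X, F.obj X = τ (σ X)) :
    functor σ ⋙ lift F τ h = F :=
  Functor.ext (fun X => (h X).symm) fun _ _ f => liftPaths_map_toPaths_map F τ h f

lemma hom_ext (hσ : Function.Surjective σ) {G G' : Push σ ⥤ D}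
    (h : functor σ ⋙ G = functor σ ⋙ G') : G = G' := by
  refine Quotient.lift_unique' _ _ _ (Paths.ext_functor ?_ ?_)
  · funext w
    obtain ⟨X, rfl⟩ := hσ w
    exact Functor.congr_obj h X
  · rintro _ _ ⟨f⟩
    exact Functor.congr_hom h f

end Push

variable {D : Type u'} [Category.{v'} D]

lemma Skeletal.of_injective_obj {F : C ⥤ D} (hD : Skeletal D) (hF : Function.Injective F.obj) :
    Skeletal C :=
  fun _ _ ⟨e⟩ => hF (hD ⟨F.mapIso e⟩)

def Skeletal.liftSkeletonObj (hD : Skeletal D) (F : C ⥤ D) : Skeleton C → D :=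
  _root_.Quotient.lift F.obj fun _ _ ⟨e⟩ => hD ⟨F.mapIso e⟩

lemma toSkeleton_surjective : Function.Surjective (toSkeleton : C → Skeleton C) :=
  fun X => ⟨(fromSkeleton C).obj X, toSkeleton_fromSkeleton_obj X⟩

/-- Unlike `Skeleton C`, this is not equivalent to `C` in general: an isomorphism between
distinct objects of `C` becomes a (possibly nontrivial) automorphism. -/
abbrev Skeletalization (C : Type u) [Category.{v} C] : Type u := Push (toSkeleton : C → Skeleton C)

namespace Skeletalization

variable (C) in
abbrev functor : C ⥤ Skeletalization C := Push.functor _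

lemma skeletal : Skeletal (Skeletalization C) :=
  Skeletal.of_injective_obj (F := Push.lift (toSkeletonFunctor C) id fun _ => rfl)
    (skeleton_skeletal C) fun _ _ => Quotient.ext

def lift (hD : Skeletal D) (F : C ⥤ D) : Skeletalization C ⥤ D :=
  Push.lift F (hD.liftSkeletonObj F) fun _ => rfl

lemma functor_comp_lift (hD : Skeletal D) (F : C ⥤ D) : functor C ⋙ lift hD F = F :=
  Push.functor_comp_lift F _ _

lemma hom_ext {G G' : Skeletalization C ⥤ D} (h : functor C ⋙ G = functor C ⋙ G') : G = G' :=
  Push.hom_ext toSkeleton_surjective h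

end Skeletalization

abbrev SkeletalCat : Type (u + 1) := ObjectProperty.FullSubcategory fun C : Cat.{u, u} => Skeletal C

namespace SkeletalCat

def reflection (A : Cat.{u, u}) : SkeletalCat.{u} :=
  ⟨Cat.of (Skeletalization A), Skeletalization.skeletal⟩

def reflectionArrow (A : Cat.{u, u}) :
    StructuredArrow A (ObjectProperty.ι fun C : Cat.{u, u} => Skeletal C) :=
  StructuredArrow.mk (Y := reflection A) (Skeletalization.functor A).toCatHom

def isUniversalReflectionArrow (A : Cat.{u, u}) : (reflectionArrow A).IsUniversal :=
  IsInitial.ofUniqueHom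
    (fun S => StructuredArrow.homMk
      (ObjectProperty.homMk (Skeletalization.lift S.right.property S.hom.toFunctor).toCatHom)
      (Cat.ext (Skeletalization.functor_comp_lift _ S.hom.toFunctor)))
    (fun _ m => StructuredArrow.ext _ _ <| ObjectProperty.hom_ext _ <| Cat.ext <|
      Skeletalization.hom_ext <| (congrArg Cat.Hom.toFunctor (StructuredArrow.w m)).trans
        (Skeletalization.functor_comp_lift _ _).symm)

end SkeletalCat

end CategoryTheory

/-- The full subcategory of `Cat` consisting of the skeletal small categories is
reflective in `Cat`: the inclusion functor has a left adjoint. -/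
theorem skeletal_reflective :
    (ObjectProperty.ι
      (fun C : Cat.{u, u} => Skeletal (C : Type u))).IsRightAdjoint := by
  have (A : Cat.{u, u}) := (SkeletalCat.isUniversalReflectionArrow A).hasInitial
  exact isRightAdjointOfStructuredArrowInitials _
end

section
/- Let F : A ⥤ B be a functor between small categories. Let K be the (non-full, wide) subcategory of A whose objects are all objects of A and whose morphisms X ⟶ Y are those morphisms f : X ⟶ Y of A such that F(X) = F(Y) and F(f) is an isomorphism (so that F(f) is an automorphism of B), and let k : K ⥤ A be the inclusion functor. Then F ∘ k is trivial, and for every small category X and every functor G : X ⥤ A such that F ∘ G is trivial, there exists a unique functor G' : X ⥤ K with k ∘ G' = G. (That is, k is the Z-kernel of F with respect to the ideal of trivial functors; equivalently, K is the pullback in Cat of the inclusion Aut(B) ⥤ B along F.) -/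
open CategoryTheory

universe u

/-- A functor is trivial if it maps every morphism to an automorphism: the images of
domain and codomain are equal and the image of the morphism is an isomorphism. -/
def IsTrivialFunctor {X : Type*} {Y : Type*} [Category X] [Category Y] (F : X ⥤ Y) :
    Prop :=
  ∀ (a b : X) (f : a ⟶ b), F.obj a = F.obj b ∧ IsIso (F.map f)

/-- The wide (non-full) subcategory of `A` whose morphisms are those morphisms `f`
of `A` that are sent by `F` to an automorphism of `B`. -/
def ZKernelCat {A B : Type u} [Category.{u} A] [Category.{u} B] (F : A ⥤ B) : Type u := A

instance ZKernelCat.category {A B : Type u} [Category.{u} A] [Category.{u} B]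
    (F : A ⥤ B) : Category.{u} (ZKernelCat F) where
  Hom X Y := {f : (show A from X) ⟶ (show A from Y) // F.obj X = F.obj Y ∧ IsIso (F.map f)}
  id X := ⟨𝟙 _, rfl, by rw [F.map_id]; infer_instance⟩
  comp f g := ⟨f.1 ≫ g.1, f.2.1.trans g.2.1, by
    rw [F.map_comp]
    have := f.2.2
    have := g.2.2
    infer_instance⟩
  id_comp f := Subtype.ext (Category.id_comp f.1)
  comp_id f := Subtype.ext (Category.comp_id f.1)
  assoc f g h := Subtype.ext (Category.assoc f.1 g.1 h.1)

/-- The inclusion functor of the `Z`-kernel subcategory into `A`. -/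
def zKernelIncl {A B : Type u} [Category.{u} A] [Category.{u} B] (F : A ⥤ B) :
    ZKernelCat F ⥤ A where
  obj X := X
  map f := f.1

/-! A morphism of `ZKernelCat F` is a morphism of `A` together with a proof that `F` sends it
to an automorphism, so a functor `G` with `G ⋙ F` trivial lifts by attaching these proofs, and
the lift is unique because `zKernelIncl F` is the identity on objects and faithful. -/

namespace ZKernelCat

variable {A B : Type u} [Category.{u} A] [Category.{u} B] {F : A ⥤ B}

theorem isTrivialFunctor_zKernelIncl_comp : IsTrivialFunctor (zKernelIncl F ⋙ F) :=
  fun _ _ f => f.2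

variable {X : Type*} [Category X]

def lift (G : X ⥤ A) (hG : IsTrivialFunctor (G ⋙ F)) : X ⥤ ZKernelCat F where
  obj x := G.obj x
  map {x y} f := ⟨G.map f, hG x y f⟩
  map_id x := Subtype.ext (G.map_id x)
  map_comp f g := Subtype.ext (G.map_comp f g)

theorem lift_comp_zKernelIncl (G : X ⥤ A) (hG : IsTrivialFunctor (G ⋙ F)) :
    lift G hG ⋙ zKernelIncl F = G :=
  rfl

theorem comp_zKernelIncl_injective :
    Function.Injective fun G : X ⥤ ZKernelCat F => G ⋙ zKernelIncl F := by
  intro G₁ G₂ h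
  have hobj : ∀ x, G₁.obj x = G₂.obj x := fun x => congrArg (·.obj x) h
  refine CategoryTheory.Functor.ext hobj fun x y f => Subtype.ext ?_
  change (zKernelIncl F).map (G₁.map f) = (zKernelIncl F).map (eqToHom _ ≫ G₂.map f ≫ eqToHom _)
  simpa only [Functor.comp_map, Functor.map_comp, eqToHom_map] using Functor.congr_hom h f

end ZKernelCat

open ZKernelCat in
/-- The inclusion `k` of the wide subcategory `K` of `A`, whose morphisms are the
morphisms of `A` sent by `F` to automorphisms of `B`, is the `Z`-kernel of `F` with
respect to the ideal of trivial functors: `F ∘ k` is trivial, and every functor `G`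
such that `F ∘ G` is trivial factors uniquely through `k`. -/
theorem zKernelIncl_is_zKernel {A B : Type u} [Category.{u} A] [Category.{u} B]
    (F : A ⥤ B) :
    IsTrivialFunctor (zKernelIncl F ⋙ F) ∧
      ∀ (X : Type u) [Category.{u} X] (G : X ⥤ A), IsTrivialFunctor (G ⋙ F) →
        ∃! G' : X ⥤ ZKernelCat F, G' ⋙ zKernelIncl F = G :=
  ⟨isTrivialFunctor_zKernelIncl_comp, fun _ _ G hG =>
    ⟨lift G hG, lift_comp_zKernelIncl G hG, fun _ hG' =>
      comp_zKernelIncl_injective (hG'.trans (lift_comp_zKernelIncl G hG).symm)⟩⟩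
end

section
/- For every small category A there exist a small skeletal groupoid S and a functor s : A ⥤ S such that s maps every morphism of A to an automorphism of S, and for every small category X and every trivial functor G : A ⥤ X (i.e., G maps every morphism of A to an automorphism of X), there exists a unique functor L : S ⥤ X with L ∘ s = G. (That is, the identity functor of A admits a Z-cokernel with respect to the ideal of trivial functors, and this Z-cokernel is the reflection of A into skeletal groupoids.) -/
/-!
The reflection has the connected components of `A` as objects. Let `U` be the group generated
by the arrows of `A` subject to `𝟙 a = 1` and `f ≫ g = g * f`; the automorphism group of a
component `c` is the subgroup of `U` generated by the arrows lying in `c`.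

A trivial functor `G` is constant on components, and for each component `c` the assignment
sending the arrows of `c` to their images under `G` (and all other arrows to `1`) respects the
relations of `U`, so it induces a homomorphism `U → Aut (G c)`; restricted to the subgroup of
`c` this is the factorization. It is unique because these subgroups are generated by the arrows.
-/

open CategoryTheory

universe u v w w'

/-- Sharing one ambient group `U` avoids transporting group elements along equalities of objects;
it loses no generality, since any family of groups embeds into its free product. -/
@[ext]
structure SubgroupGroupoid {T : Type u} {U : Type v} [Group U] (H : T → Subgroup U) :
    Type u where
  as : T

namespace SubgroupGroupoid

variable {T : Type u} {U : Type v} [Group U] (H : T → Subgroup U)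

instance : Category.{v} (SubgroupGroupoid H) where
  Hom c d := {u : U // u ∈ H c.as ∧ c = d}
  id _ := ⟨1, one_mem _, rfl⟩
  comp {c _ _} m n :=
    ⟨n.1 * m.1, mul_mem (m.2.2 ▸ n.2.1 : n.1 ∈ H c.as) m.2.1, m.2.2.trans n.2.2⟩
  id_comp _ := Subtype.ext (mul_one _)
  comp_id _ := Subtype.ext (one_mul _)
  assoc _ _ _ := Subtype.ext (mul_assoc _ _ _).symm

instance : Groupoid.{v} (SubgroupGroupoid H) where
  inv {c d} m :=
    ⟨m.1⁻¹, (m.2.2 ▸ (inv_mem m.2.1 : m.1⁻¹ ∈ H c.as) : m.1⁻¹ ∈ H d.as), m.2.2.symm⟩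
  inv_comp _ := Subtype.ext (mul_inv_cancel _)
  comp_inv _ := Subtype.ext (inv_mul_cancel _)

lemma skeletal : Skeletal (SubgroupGroupoid H) :=
  fun _ _ ⟨e⟩ => e.hom.2.2

variable {H}

@[ext]
lemma hom_ext {c d : SubgroupGroupoid H} {m n : c ⟶ d} (h : m.1 = n.1) : m = n :=
  Subtype.ext h

@[simp]
lemma comp_val {c d e : SubgroupGroupoid H} (m : c ⟶ d) (n : d ⟶ e) : (m ≫ n).1 = n.1 * m.1 :=
  rfl

@[simp]
lemma eqToHom_val {c d : SubgroupGroupoid H} (h : c = d) : (eqToHom h).1 = 1 := by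
  subst h
  rfl

def toEnd (c : SubgroupGroupoid H) : H c.as →* End c where
  toFun u := ⟨u, u.2, rfl⟩
  map_one' := rfl
  map_mul' _ _ := rfl

variable {X : Type w} [Category.{w'} X]

def lift (obj : T → X) (ρ : ∀ c, H c →* Aut (obj c)) : SubgroupGroupoid H ⥤ X where
  obj c := obj c.as
  map {c _} m := (ρ c.as ⟨m.1, m.2.1⟩).hom ≫ eqToHom (congrArg (obj ·.as) m.2.2)
  map_id c := by
    simp only [eqToHom_refl, Category.comp_id]
    exact congrArg Iso.hom (ρ c.as).map_one
  map_comp := by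
    rintro c _ _ ⟨u, hu, rfl⟩ ⟨v, hv, rfl⟩
    simp only [eqToHom_refl, Category.comp_id]
    exact congrArg Iso.hom ((ρ c.as).map_mul ⟨v, hv⟩ ⟨u, hu⟩)

lemma lift_map (obj : T → X) (ρ : ∀ c, H c →* Aut (obj c)) {c d : SubgroupGroupoid H}
    (m : c ⟶ d) :
    (lift obj ρ).map m = (ρ c.as ⟨m.1, m.2.1⟩).hom ≫ eqToHom (congrArg (obj ·.as) m.2.2) :=
  rfl

lemma functor_ext {S : T → Set U}
    {F₁ F₂ : SubgroupGroupoid (fun c => Subgroup.closure (S c)) ⥤ X}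
    (hobj : ∀ c, F₁.obj c = F₂.obj c)
    (hmap : ∀ (c : SubgroupGroupoid _) (m : c ⟶ c), m.1 ∈ S c.as →
      F₁.map m = eqToHom (hobj c) ≫ F₂.map m ≫ eqToHom (hobj c).symm) :
    F₁ = F₂ := by
  refine CategoryTheory.Functor.ext hobj ?_
  rintro c _ ⟨u, hu, rfl⟩
  -- both sides are monoid homomorphisms in `u`, so it suffices to compare them on `S c.as`
  have key : (F₁.mapEnd (X := c)).comp (toEnd c) =
      (Iso.conj (eqToIso (hobj c)).symm).toMonoidHom.comp ((F₂.mapEnd (X := c)).comp (toEnd c)) :=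
    MonoidHom.eq_of_eqOn_dense Subgroup.closure_closure_coe_preimage fun v hv => by
      simpa [Iso.conj_apply] using hmap c (toEnd c v) hv
  exact DFunLike.congr_fun key ⟨u, hu⟩

end SubgroupGroupoid

section

variable (A : Type u) [Category.{v} A]

/-- Products are taken in the order of composition in `End` and `SingleObj`:
`f ≫ g` corresponds to `g * f`. -/
def arrowRels : Set (FreeGroup (Arrow A)) :=
  Set.range (fun a : A => FreeGroup.of (Arrow.mk (𝟙 a))) ∪
    {r | ∃ (a b c : A) (f : a ⟶ b) (g : b ⟶ c),
      r = FreeGroup.of (Arrow.mk g) * FreeGroup.of (Arrow.mk f) *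
        (FreeGroup.of (Arrow.mk (f ≫ g)))⁻¹}

abbrev ArrowGroup : Type (max u v) := PresentedGroup (arrowRels A)

end

namespace ArrowGroup

variable {A : Type u} [Category.{v} A]

def of {a b : A} (f : a ⟶ b) : ArrowGroup A := PresentedGroup.of (Arrow.mk f)

lemma of_id (a : A) : of (𝟙 a) = 1 :=
  PresentedGroup.one_of_mem (Or.inl ⟨a, rfl⟩)

lemma of_comp {a b c : A} (f : a ⟶ b) (g : b ⟶ c) : of (f ≫ g) = of g * of f := by
  have h := PresentedGroup.one_of_mem (rels := arrowRels A) (Or.inr ⟨a, b, c, f, g, rfl⟩)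
  rw [map_mul, map_mul, map_inv, mul_inv_eq_one] at h
  exact h.symm

def lift {M : Type w} [Group M] (F : A ⥤ SingleObj M) : ArrowGroup A →* M :=
  PresentedGroup.toGroup (f := fun p : Arrow A => (F.map p.hom : M)) <| by
    rintro r (⟨a, rfl⟩ | ⟨a, b, c, f, g, rfl⟩)
    · simp only [FreeGroup.lift_apply_of, Arrow.mk_hom]
      exact F.map_id a
    · simp [SingleObj.comp_as_mul]

@[simp]
lemma lift_of {M : Type w} [Group M] (F : A ⥤ SingleObj M) {a b : A} (f : a ⟶ b) :
    lift F (of f) = F.map f :=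
  PresentedGroup.toGroup.of _

end ArrowGroup

section Reflection

variable {A : Type u} [Category.{v} A]

def component (a : A) : ConnectedComponents A := Quotient.mk'' a

lemma component_eq_of_hom {a b : A} (f : a ⟶ b) : component a = component b :=
  Quot.sound (Zigzag.of_hom f)

variable (A) in
def componentArrows (c : ConnectedComponents A) : Set (ArrowGroup A) :=
  {x | ∃ f : Arrow A, component f.left = c ∧ PresentedGroup.of f = x}

variable (A) in
abbrev SkeletalGroupoidReflection : Type u :=
  SubgroupGroupoid fun c : ConnectedComponents A => Subgroup.closure (componentArrows A c)

variable (A) in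
def toReflection : A ⥤ SkeletalGroupoidReflection A where
  obj a := ⟨component a⟩
  map f := ⟨ArrowGroup.of f, Subgroup.subset_closure ⟨Arrow.mk f, rfl, rfl⟩,
    SubgroupGroupoid.ext (component_eq_of_hom f)⟩
  map_id a := Subtype.ext (ArrowGroup.of_id a)
  map_comp f g := Subtype.ext (ArrowGroup.of_comp f g)

lemma toReflection_map_val {a b : A} (f : a ⟶ b) :
    ((toReflection A).map f).1 = ArrowGroup.of f :=
  rfl

lemma toReflection_obj_eq_of_hom {a b : A} (f : a ⟶ b) :
    (toReflection A).obj a = (toReflection A).obj b :=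
  SubgroupGroupoid.ext (component_eq_of_hom f)

variable (A) in
lemma isTrivialFunctor_toReflection : IsTrivialFunctor (toReflection A) :=
  fun _ _ f => ⟨toReflection_obj_eq_of_hom f, inferInstance⟩

lemma SkeletalGroupoidReflection.functor_ext {X : Type w} [Category.{w'} X]
    {L₁ L₂ : SkeletalGroupoidReflection A ⥤ X} (h : toReflection A ⋙ L₁ = toReflection A ⋙ L₂) :
    L₁ = L₂ := by
  have hobj : ∀ c, L₁.obj c = L₂.obj c :=
    fun ⟨c⟩ => Quotient.inductionOn c (Functor.congr_obj h)
  refine SubgroupGroupoid.functor_ext hobj ?_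
  rintro c m ⟨f, hc, hf⟩
  obtain rfl : (toReflection A).obj f.left = c := SubgroupGroupoid.ext hc
  obtain rfl : (toReflection A).map f.hom ≫ eqToHom (toReflection_obj_eq_of_hom f.hom).symm = m :=
    SubgroupGroupoid.hom_ext (by
      rw [SubgroupGroupoid.comp_val, SubgroupGroupoid.eqToHom_val, one_mul, ← hf]
      rfl)
  have := Functor.congr_hom h f.hom
  simp only [Functor.comp_map] at this
  simp [this, eqToHom_map]

end Reflection

namespace IsTrivialFunctor

variable {A : Type u} [Category.{v} A] {X : Type w} [Category.{w'} X] {G : A ⥤ X}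

lemma obj_eq_of_zigzag (hG : IsTrivialFunctor G) {a b : A} (h : Zigzag a b) :
    G.obj a = G.obj b := by
  induction h with
  | refl => rfl
  | tail _ hbc ih =>
    obtain ⟨⟨f⟩⟩ | ⟨⟨f⟩⟩ := hbc
    exacts [ih.trans (hG _ _ f).1, ih.trans (hG _ _ f).1.symm]

variable (hG : IsTrivialFunctor G)

def componentObj : ConnectedComponents A → X :=
  Quotient.lift G.obj fun _ _ => hG.obj_eq_of_zigzag

noncomputable def componentAut {a b : A} (f : a ⟶ b) {c : ConnectedComponents A}
    (h : component a = c) : Aut (hG.componentObj c) :=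
  haveI := (hG a b f).2
  eqToIso (by subst h; rfl) ≪≫ asIso (G.map f) ≪≫ eqToIso (by subst h; exact (hG a b f).1.symm)

lemma componentAut_id (a : A) {c : ConnectedComponents A} (h : component a = c) :
    hG.componentAut (𝟙 a) h = 1 := by
  ext
  simp only [componentAut, CategoryTheory.Functor.map_id, Iso.trans_hom, eqToIso.hom, asIso_hom,
    Category.id_comp, eqToHom_trans, eqToHom_refl]
  rfl

lemma componentAut_comp {a b d : A} (f : a ⟶ b) (g : b ⟶ d) {c : ConnectedComponents A}
    (h : component a = c) (h' : component b = c) :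
    hG.componentAut (f ≫ g) h = hG.componentAut g h' * hG.componentAut f h := by
  ext
  rw [Aut.Aut_mul_def]
  simp [componentAut]

open Classical in
noncomputable def componentAction (c : ConnectedComponents A) :
    A ⥤ SingleObj (Aut (hG.componentObj c)) where
  obj _ := SingleObj.star _
  map {a _} f := if h : component a = c then hG.componentAut f h else 1
  map_id a := by
    split_ifs with h
    · exact hG.componentAut_id a h
    · rfl
  map_comp {a b _} f g := by
    have hab := component_eq_of_hom f
    by_cases h : component a = c
    · have h' : component b = c := hab ▸ h
      simp only [dif_pos h, dif_pos h', SingleObj.comp_as_mul]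
      exact hG.componentAut_comp f g h h'
    · simp [h, ← hab]

lemma componentAction_map {a b : A} (f : a ⟶ b) {c : ConnectedComponents A}
    (h : component a = c) : (hG.componentAction c).map f = hG.componentAut f h :=
  dif_pos h

noncomputable def reflectionLift : SkeletalGroupoidReflection A ⥤ X :=
  SubgroupGroupoid.lift hG.componentObj fun c =>
    (ArrowGroup.lift (hG.componentAction c)).comp (Subgroup.subtype _)

lemma toReflection_comp_reflectionLift : toReflection A ⋙ hG.reflectionLift = G := by
  refine CategoryTheory.Functor.ext (fun _ => rfl) fun a b f => ?_
  simp only [Functor.comp_map, reflectionLift, SubgroupGroupoid.lift_map, MonoidHom.comp_apply,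
    Subgroup.coe_subtype, toReflection_map_val, ArrowGroup.lift_of]
  rw [hG.componentAction_map f (c := ((toReflection A).obj a).as) rfl]
  simp only [componentAut, Iso.trans_hom, eqToIso.hom, asIso_hom, Category.assoc, eqToHom_trans]
  rfl

end IsTrivialFunctor

/-- For every small category `A` there is a small skeletal groupoid `S` together with a
trivial functor `s : A ⥤ S` such that every trivial functor out of `A` factors uniquely
through `s`: the identity functor of `A` admits a `Z`-cokernel with respect to the
ideal of trivial functors, and this `Z`-cokernel is the reflection of `A` into skeletal
groupoids. -/
theorem exists_zCokernel_of_id (A : Type u) [Category.{u} A] :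
    ∃ (S : Cat.{u, u}) (s : A ⥤ S),
      (∀ (X Y : (S : Type u)) (f : X ⟶ Y), IsIso f) ∧ Skeletal (S : Type u) ∧
        IsTrivialFunctor s ∧
        ∀ (X : Cat.{u, u}) (G : A ⥤ X), IsTrivialFunctor G →
          ∃! L : (S : Type u) ⥤ X, s ⋙ L = G := by
  refine ⟨Cat.of (SkeletalGroupoidReflection A), toReflection A,
    fun _ _ f => IsIso.of_groupoid (C := SkeletalGroupoidReflection A) f,
    SubgroupGroupoid.skeletal _, isTrivialFunctor_toReflection A, fun _ _ hG => ?_⟩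
  exact ⟨hG.reflectionLift, hG.toReflection_comp_reflectionLift, fun _ hL =>
    SkeletalGroupoidReflection.functor_ext (hL.trans hG.toReflection_comp_reflectionLift.symm)⟩
end

section
/- Let F : A ⥤ B be a functor between small categories. Then F admits a Z-cokernel with respect to the ideal of trivial functors: there exist a small category C and a functor U : B ⥤ C such that U ∘ F is trivial, and for every small category Y and every functor W : B ⥤ Y with W ∘ F trivial, there exists a unique functor L : C ⥤ Y with L ∘ U = W. -/
open CategoryTheory

universe u

/-!
The cokernel is presented by generators and relations. Its objects are those of `B` modulo the
equivalence relation generated by `F a ~ F b` whenever there is a morphism `a ⟶ b`; its morphisms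
are paths of morphisms of `B` and of formal inverses of the morphisms `F f`, modulo composition
in `B` and the two inverse laws. A functor `W` with `W ∘ F` trivial is exactly the data needed to
interpret these generators compatibly with the relations, and the universal properties of path
categories and of quotient categories turn this into existence and uniqueness of the factorisation.
-/

-- `Paths.lift_toPath` in the `Paths.of` form in which the generators occur; `rw` does not see
-- through `(Paths.of V).map e = e.toPath`.
theorem CategoryTheory.Paths.lift_map_of {V : Type*} [Quiver V] {C : Type*} [Category C]
    (φ : V ⥤q C) {X Y : V} (e : X ⟶ Y) : (Paths.lift φ).map ((Paths.of V).map e) = φ.map e :=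
  Paths.lift_toPath φ e

namespace TrivialCokernel

variable {A B : Type u} [Category.{u} A] [Category.{u} B] (F : A ⥤ B)

def ObjRel (x y : B) : Prop :=
  ∃ (a b : A) (_ : a ⟶ b), F.obj a = x ∧ F.obj b = y

abbrev Obj := Quot (ObjRel F)

inductive Edge : Obj F → Obj F → Type u
  | of {x y : B} (f : x ⟶ y) : Edge (Quot.mk _ x) (Quot.mk _ y)
  | inv {a b : A} (f : a ⟶ b) : Edge (Quot.mk _ (F.obj b)) (Quot.mk _ (F.obj a))

instance : Quiver (Obj F) := ⟨Edge F⟩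

inductive Rel : HomRel (Paths (Obj F))
  | id (x : B) : Rel ((Paths.of _).map (Edge.of (𝟙 x))) (𝟙 ((Paths.of _).obj (Quot.mk _ x)))
  | comp {x y z : B} (f : x ⟶ y) (g : y ⟶ z) :
      Rel ((Paths.of _).map (Edge.of f) ≫ (Paths.of _).map (Edge.of g))
        ((Paths.of _).map (Edge.of (f ≫ g)))
  | hom_inv {a b : A} (f : a ⟶ b) :
      Rel ((Paths.of _).map (Edge.of (F.map f)) ≫ (Paths.of _).map (Edge.inv f))
        (𝟙 ((Paths.of _).obj (Quot.mk _ (F.obj a))))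
  | inv_hom {a b : A} (f : a ⟶ b) :
      Rel ((Paths.of _).map (Edge.inv f) ≫ (Paths.of _).map (Edge.of (F.map f)))
        (𝟙 ((Paths.of _).obj (Quot.mk _ (F.obj b))))

abbrev Cokernel := CategoryTheory.Quotient (Rel F)

def gen : Obj F ⥤q Cokernel F :=
  Paths.of _ ⋙q (CategoryTheory.Quotient.functor (Rel F)).toPrefunctor

theorem gen_comp_gen {X Y Z : Obj F} (e : Edge F X Y) (e' : Edge F Y Z) :
    (gen F).map e ≫ (gen F).map e' = (CategoryTheory.Quotient.functor (Rel F)).map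
      ((Paths.of _).map e ≫ (Paths.of _).map e') :=
  ((CategoryTheory.Quotient.functor (Rel F)).map_comp _ _).symm

def toCokernel : B ⥤ Cokernel F where
  obj x := (gen F).obj (Quot.mk _ x)
  map f := (gen F).map (Edge.of f)
  map_id x := CategoryTheory.Quotient.sound _ (Rel.id x)
  map_comp f g := by rw [gen_comp_gen, CategoryTheory.Quotient.sound _ (Rel.comp f g)]; rfl

theorem toCokernel_map_comp_gen_inv {a b : A} (f : a ⟶ b) :
    (toCokernel F).map (F.map f) ≫ (gen F).map (Edge.inv f) = 𝟙 _ :=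
  (gen_comp_gen F _ _).trans (CategoryTheory.Quotient.sound _ (Rel.hom_inv f))

theorem gen_inv_comp_toCokernel_map {a b : A} (f : a ⟶ b) :
    (gen F).map (Edge.inv f) ≫ (toCokernel F).map (F.map f) = 𝟙 _ :=
  (gen_comp_gen F _ _).trans (CategoryTheory.Quotient.sound _ (Rel.inv_hom f))

def mapIso {a b : A} (f : a ⟶ b) :
    (toCokernel F).obj (F.obj a) ≅ (toCokernel F).obj (F.obj b) where
  hom := (toCokernel F).map (F.map f)
  inv := (gen F).map (Edge.inv f)
  hom_inv_id := toCokernel_map_comp_gen_inv F f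
  inv_hom_id := gen_inv_comp_toCokernel_map F f

theorem isTrivialFunctor_comp_toCokernel : IsTrivialFunctor (F ⋙ toCokernel F) :=
  fun a b f => ⟨congrArg (fun x => (gen F).obj x) (Quot.sound ⟨a, b, f, rfl, rfl⟩),
    (mapIso F f).isIso_hom⟩

variable {F} {Y : Type*} [Category Y]

theorem functor_ext {L₁ L₂ : Cokernel F ⥤ Y}
    (h : toCokernel F ⋙ L₁ = toCokernel F ⋙ L₂) : L₁ = L₂ := by
  refine CategoryTheory.Quotient.lift_unique' _ _ _ (Paths.ext_functor ?_ ?_)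
  · exact funext (Quot.ind fun x => Functor.congr_obj h x)
  · rintro _ _ (e : Edge F _ _)
    cases e with
    | of f => exact Functor.congr_hom h f
    | inv f =>
      exact Functor.congr_inv_of_congr_hom L₁ L₂ (mapIso F f)
        (Functor.congr_obj h _) (Functor.congr_obj h _) (Functor.congr_hom h (F.map f))

variable (W : B ⥤ Y) (hW : IsTrivialFunctor (F ⋙ W))

noncomputable def liftPrefunctor : Obj F ⥤q Y where
  obj := Quot.lift W.obj fun _ _ ⟨a, b, f, ha, hb⟩ => ha ▸ hb ▸ (hW a b f).1
  map
    | .of f => W.map f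
    | .inv (a := a) (b := b) f => haveI := (hW a b f).2; inv ((F ⋙ W).map f)

noncomputable def lift : Cokernel F ⥤ Y :=
  CategoryTheory.Quotient.lift _ (Paths.lift (liftPrefunctor W hW)) fun _ _ _ _ h => by
    cases h with
    | id x => exact (Paths.lift_map_of _ _).trans (W.map_id x)
    | comp f g =>
      rw [Functor.map_comp, Paths.lift_map_of, Paths.lift_map_of, Paths.lift_map_of]
      exact (W.map_comp f g).symm
    | hom_inv f =>
      rw [Functor.map_comp, Paths.lift_map_of, Paths.lift_map_of]
      exact @IsIso.hom_inv_id _ _ _ _ ((F ⋙ W).map f) (hW _ _ f).2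
    | inv_hom f =>
      rw [Functor.map_comp, Paths.lift_map_of, Paths.lift_map_of]
      exact @IsIso.inv_hom_id _ _ _ _ ((F ⋙ W).map f) (hW _ _ f).2

theorem toCokernel_comp_lift : toCokernel F ⋙ lift W hW = W :=
  Functor.hext (fun _ => rfl) fun _ _ f => heq_of_eq (Paths.lift_map_of (liftPrefunctor W hW) (Edge.of f))

end TrivialCokernel

open TrivialCokernel in
/-- Every functor `F : A ⥤ B` between small categories admits a `Z`-cokernel with
respect to the ideal of trivial functors: there is a functor `U : B ⥤ C` with `U ∘ F`
trivial such that every functor `W` out of `B` with `W ∘ F` trivial factors uniquely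
through `U`. -/
theorem exists_zCokernel {A B : Type u} [Category.{u} A] [Category.{u} B]
    (F : A ⥤ B) :
    ∃ (C : Cat.{u, u}) (U : B ⥤ C),
      IsTrivialFunctor (F ⋙ U) ∧
        ∀ (Y : Cat.{u, u}) (W : B ⥤ Y), IsTrivialFunctor (F ⋙ W) →
          ∃! L : (C : Type u) ⥤ Y, U ⋙ L = W :=
  ⟨Cat.of (Cokernel F), toCokernel F, isTrivialFunctor_comp_toCokernel F, fun _ W hW =>
    ⟨lift W hW, toCokernel_comp_lift W hW, fun _ hL =>
      functor_ext (hL.trans (toCokernel_comp_lift W hW).symm)⟩⟩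
end

section
/- Let A be a small category and let s : A ⥤ S be a Z-cokernel of the identity functor of A with respect to the ideal of trivial functors (i.e., s is trivial and every trivial functor out of A factors uniquely through s). Let F : A ⥤ B be any functor between small categories, and form the pushout in Cat of s along F, with resulting functors U : B ⥤ C and V : S ⥤ C satisfying U ∘ F = V ∘ s. Then U is a Z-cokernel of F: U ∘ F is trivial, and every functor W : B ⥤ Y with W ∘ F trivial factors uniquely through U. -/
open CategoryTheory Limits

universe u

theorem IsTrivialFunctor.comp {X Y Z : Type*} [Category X] [Category Y] [Category Z]
    {F : X ⥤ Y} (hF : IsTrivialFunctor F) (G : Y ⥤ Z) : IsTrivialFunctor (F ⋙ G) :=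
  fun a b f => ⟨congrArg G.obj (hF a b f).1,
    have := (hF a b f).2
    inferInstanceAs (IsIso (G.map (F.map f)))⟩

theorem PushoutCocone.IsColimit.existsUnique_inl_comp_eq_of_existsUnique {C : Type*} [Category C]
    {A B S : C} {F : A ⟶ B} {s : A ⟶ S} {c : PushoutCocone F s} (hc : IsColimit c)
    {Y : C} (W : B ⟶ Y) (hW : ∃! L : S ⟶ Y, s ≫ L = F ≫ W) :
    ∃! L : c.pt ⟶ Y, c.inl ≫ L = W := by
  obtain ⟨L, hL, hL_unique⟩ := hW
  refine ⟨PushoutCocone.IsColimit.desc hc W L hL.symm,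
    PushoutCocone.IsColimit.inl_desc hc _ _ _, fun L₁ hL₁ => ?_⟩
  have hinr : c.inr ≫ L₁ = L := hL_unique _ <| by
    dsimp only
    rw [← c.condition_assoc, hL₁]
  exact PushoutCocone.IsColimit.hom_ext hc (by simp [hL₁]) (by simp [hinr])

/-- Let `s : A ⥤ S` be a `Z`-cokernel of the identity functor of `A` with respect to
the ideal of trivial functors, let `F : A ⥤ B` be any functor, and form the pushout in
`Cat` of `s` along `F`, with legs `U = c.inl : B ⥤ C` and `V = c.inr : S ⥤ C`
(satisfying `U ∘ F = V ∘ s`).  Then `U` is a `Z`-cokernel of `F`: `U ∘ F` is trivial,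
and every functor `W` out of `B` with `W ∘ F` trivial factors uniquely through `U`. -/
theorem pushout_of_zCokernel_id_is_zCokernel
    (A B S : Cat.{u, u}) (s : A ⟶ S)
    (hs : IsTrivialFunctor (s.toFunctor : (A : Type u) ⥤ (S : Type u)))
    (huniv : ∀ (X : Cat.{u, u}) (G : A ⟶ X),
      IsTrivialFunctor (G.toFunctor : (A : Type u) ⥤ (X : Type u)) → ∃! L : S ⟶ X, s ≫ L = G)
    (F : A ⟶ B) (c : PushoutCocone F s) (hc : IsColimit c) :
    IsTrivialFunctor ((F ≫ c.inl : A ⟶ c.pt).toFunctor : (A : Type u) ⥤ (c.pt : Type u)) ∧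
      ∀ (Y : Cat.{u, u}) (W : B ⟶ Y),
        IsTrivialFunctor ((F ≫ W : A ⟶ Y).toFunctor : (A : Type u) ⥤ (Y : Type u)) →
          ∃! L : c.pt ⟶ Y, c.inl ≫ L = W := by
  refine ⟨?_, fun Y W hW =>
    PushoutCocone.IsColimit.existsUnique_inl_comp_eq_of_existsUnique hc W (huniv Y _ hW)⟩
  rw [c.condition]
  exact hs.comp c.inr.toFunctor
end

section
/- Let A be a small category and let Aut(A) denote the wide subcategory of A whose objects are all objects of A and whose morphisms are the automorphisms of A (morphisms f : X ⟶ X that are isomorphisms), with inclusion functor j : Aut(A) ⥤ A. Then Aut(A) is a skeletal groupoid, and for every small skeletal groupoid S and every functor G : S ⥤ A there exists a unique functor G' : S ⥤ Aut(A) with j ∘ G' = G. Consequently, the full subcategory of skeletal groupoids is coreflective in Cat, with coreflection A ↦ Aut(A). -/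
open CategoryTheory

universe u

/-- The wide subcategory `Aut(A)` of `A` whose morphisms are the automorphisms of `A`:
morphisms `f : X ⟶ Y` such that `X = Y` and `f` is an isomorphism. -/
def AutCat (A : Type u) [Category.{u} A] : Type u := A

instance AutCat.category (A : Type u) [Category.{u} A] : Category.{u} (AutCat A) where
  Hom X Y := {f : (show A from X) ⟶ (show A from Y) // X = Y ∧ IsIso f}
  id X := ⟨𝟙 _, rfl, inferInstance⟩
  comp f g := ⟨f.1 ≫ g.1, f.2.1.trans g.2.1, by
    have := f.2.2
    have := g.2.2
    infer_instance⟩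
  id_comp f := Subtype.ext (Category.id_comp f.1)
  comp_id f := Subtype.ext (Category.comp_id f.1)
  assoc f g h := Subtype.ext (Category.assoc f.1 g.1 h.1)

/-- The inclusion functor `j : Aut(A) ⥤ A`. -/
def autCatIncl (A : Type u) [Category.{u} A] : AutCat A ⥤ A where
  obj X := X
  map f := f.1

/-! An isomorphism in a skeletal category is an automorphism, so a functor from a skeletal
groupoid sends every morphism to an automorphism and factors through `Aut(A)`; the factorization
is unique because `Aut(A) ⥤ A` is faithful and the identity on objects. This unique
factorization is the hom-set bijection `(S ⥤ A) ≃ (S ⥤ Aut(A))` exhibiting `A ↦ Aut(A)` as right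
adjoint to the inclusion of skeletal groupoids into `Cat`. -/

namespace AutCat

variable {A : Type u} [Category.{u} A]

theorem isIso (X Y : AutCat A) (f : X ⟶ Y) : IsIso f := by
  obtain ⟨g, rfl, hg⟩ := f
  exact ⟨⟨⟨inv g, rfl, inferInstance⟩, Subtype.ext (IsIso.hom_inv_id g),
    Subtype.ext (IsIso.inv_hom_id g)⟩⟩

theorem skeletal : Skeletal (AutCat A) := fun _ _ ⟨e⟩ => e.hom.2.1

section Lift

variable {S : Type*} [Category S]

def lift (hiso : ∀ (X Y : S) (f : X ⟶ Y), IsIso f) (hskel : Skeletal S) (G : S ⥤ A) :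
    S ⥤ AutCat A where
  obj X := G.obj X
  map {X Y} f :=
    have := hiso X Y f
    ⟨G.map f, congrArg G.obj (hskel ⟨asIso f⟩), inferInstance⟩
  map_id X := Subtype.ext (G.map_id X)
  map_comp f g := Subtype.ext (G.map_comp f g)

def liftEquiv (hiso : ∀ (X Y : S) (f : X ⟶ Y), IsIso f) (hskel : Skeletal S) :
    (S ⥤ A) ≃ (S ⥤ AutCat A) where
  toFun := lift hiso hskel
  invFun G' := G' ⋙ autCatIncl A
  left_inv _ := rfl
  right_inv _ := rfl

theorem existsUnique_comp_autCatIncl_eq (hiso : ∀ (X Y : S) (f : X ⟶ Y), IsIso f)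
    (hskel : Skeletal S) (G : S ⥤ A) :
    ∃! G' : S ⥤ AutCat A, G' ⋙ autCatIncl A = G :=
  ⟨lift hiso hskel G, (liftEquiv hiso hskel).left_inv G,
    fun G' h => h ▸ ((liftEquiv hiso hskel).right_inv G').symm⟩

end Lift

end AutCat

abbrev skeletalGroupoids : ObjectProperty Cat.{u, u} := fun C =>
  (∀ (X Y : (C : Type u)) (f : X ⟶ Y), IsIso f) ∧ Skeletal (C : Type u)

def autCatSkeletalGroupoid (C : Cat.{u, u}) : skeletalGroupoids.FullSubcategory :=
  ⟨Cat.of (AutCat C), AutCat.isIso (A := C), AutCat.skeletal (A := C)⟩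

def skeletalGroupoidsHomEquiv (S : skeletalGroupoids.{u}.FullSubcategory) (C : Cat.{u, u}) :
    (skeletalGroupoids.ι.obj S ⟶ C) ≃ (S ⟶ autCatSkeletalGroupoid C) :=
  (Cat.Hom.equivFunctor _ _).trans <| (AutCat.liftEquiv S.2.1 S.2.2).trans <|
    (Functor.equivCatHom _ _).trans
      (skeletalGroupoids.fullyFaithfulι.homEquiv (X := S) (Y := autCatSkeletalGroupoid C)).symm

-- `AutCat.lift` acts pointwise, so it commutes with precomposition definitionally.
def autCatAdjunction :
    skeletalGroupoids.ι ⊣ Adjunction.rightAdjointOfEquiv skeletalGroupoidsHomEquiv.{u}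
      (fun _ _ _ _ _ => rfl) :=
  Adjunction.adjunctionOfEquivRight _ _

/-- `Aut(A)` is a skeletal groupoid, every functor from a small skeletal groupoid to
`A` factors uniquely through the inclusion `j : Aut(A) ⥤ A`, and consequently the full
subcategory of `Cat` consisting of the skeletal groupoids is coreflective in `Cat`. -/
theorem autCat_coreflection (A : Type u) [Category.{u} A] :
    (∀ (X Y : AutCat A) (f : X ⟶ Y), IsIso f) ∧ Skeletal (AutCat A) ∧
      (∀ (S : Type u) [Category.{u} S],
        (∀ (X Y : S) (f : X ⟶ Y), IsIso f) → Skeletal S →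
          ∀ G : S ⥤ A, ∃! G' : S ⥤ AutCat A, G' ⋙ autCatIncl A = G) ∧
      (ObjectProperty.ι
        (fun C : Cat.{u, u} =>
          (∀ (X Y : (C : Type u)) (f : X ⟶ Y), IsIso f) ∧
            Skeletal (C : Type u))).IsLeftAdjoint :=
  ⟨AutCat.isIso, AutCat.skeletal,
    fun _ _ hiso hskel => AutCat.existsUnique_comp_autCatIncl_eq hiso hskel,
    ⟨_, ⟨autCatAdjunction⟩⟩⟩
end
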